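/- arXiv:2203.05686 — 2 statements merged into one kernel-verified Lean document; each statement's English description precedes it below -/
import Mathlib

section
/- With the data of the mean-field operator setup (finite type set Φ, matrices H(φ), G(φ), Q(φ) with ‖H(φ)‖ < 1 for all φ, probability weights P, initial means ν(φ)), for every bounded sequence X̄ : ℕ → ℝⁿ the inner series ∑_{s=j+1}^{∞} (H(φ)ᵀ)^{s-j-1} Q(φ) X̄_s converges for every j and φ, and the sequence T(X̄) is bounded: sup_k ‖T(X̄)(k)‖ ≤ ∑_{φ∈Φ} ( ‖ν(φ)‖ + ‖G(φ)‖‖Q(φ)‖ (sup_j ‖X̄_j‖) / (1-‖H(φ)‖)² ) P(φ) < ∞. In particular, T maps the space of bounded ℝⁿ-valued sequences into itself. -/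
/-! Since `‖(Hᵀ)^m‖ ≤ ‖H‖^m` with `‖H‖ < 1`, the inner series is dominated by the geometric
series `‖Q‖ C ∑ ‖H‖^m = ‖Q‖ C / (1 - ‖H‖)`; the finite convolution with `H^(k-1-j)` costs a
second factor `1 / (1 - ‖H‖)`, and `‖H^k ν‖ ≤ ‖ν‖`. Averaging over `φ` with nonnegative
weights gives the bound. -/

/-- The aggregate trajectory of agents of type `φ`:
`X̂_k(φ; X̄) = H(φ)^k ν(φ) + ∑_{j=0}^{k-1} H(φ)^{k-1-j} G(φ) ∑_{s=j+1}^∞ (H(φ)ᵀ)^{s-j-1} Q(φ) X̄_s`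
(the inner series reindexed via `s = j + 1 + m`). Matrices are modeled as continuous
linear maps on Euclidean space; transpose is the adjoint. -/
noncomputable def XhatMF {n : ℕ} {Φ : Type*}
    (H G Q : Φ → (EuclideanSpace ℝ (Fin n) →L[ℝ] EuclideanSpace ℝ (Fin n)))
    (ν : Φ → EuclideanSpace ℝ (Fin n)) (X : ℕ → EuclideanSpace ℝ (Fin n))
    (φ : Φ) (k : ℕ) : EuclideanSpace ℝ (Fin n) :=
  ((H φ) ^ k) (ν φ) +
    ∑ j ∈ Finset.range k, ((H φ) ^ (k - 1 - j))
      ((G φ) (∑' m : ℕ, ((ContinuousLinearMap.adjoint (H φ)) ^ m) ((Q φ) (X (j + 1 + m)))))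

/-- The mean-field consistency operator `T(X̄)(k) = ∑_{φ ∈ Φ} X̂_k(φ; X̄) P(φ)`. -/
noncomputable def TMF {n : ℕ} {Φ : Type*} [Fintype Φ]
    (H G Q : Φ → (EuclideanSpace ℝ (Fin n) →L[ℝ] EuclideanSpace ℝ (Fin n)))
    (P : Φ → ℝ) (ν : Φ → EuclideanSpace ℝ (Fin n)) (X : ℕ → EuclideanSpace ℝ (Fin n))
    (k : ℕ) : EuclideanSpace ℝ (Fin n) :=
  ∑ φ, P φ • XhatMF H G Q ν X φ k

section PowerSeries

variable {𝕜 E : Type*} [NontriviallyNormedField 𝕜] [NormedAddCommGroup E] [NormedSpace 𝕜 E]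

theorem ContinuousLinearMap.norm_pow_apply_le (A : E →L[𝕜] E) (m : ℕ) (x : E) :
    ‖(A ^ m) x‖ ≤ ‖A‖ ^ m * ‖x‖ := by
  induction m with
  | zero => simp
  | succ m ih =>
    calc ‖(A ^ (m + 1)) x‖ = ‖A ((A ^ m) x)‖ := by rw [pow_succ']; rfl
      _ ≤ ‖A‖ * (‖A‖ ^ m * ‖x‖) := A.le_opNorm_of_le ih
      _ = ‖A‖ ^ (m + 1) * ‖x‖ := by ring

variable {A : E →L[𝕜] E} {y : ℕ → E} {c : ℝ}

theorem ContinuousLinearMap.summable_pow_apply_of_norm_lt_one [CompleteSpace E] (hA : ‖A‖ < 1)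
    (hy : ∀ m, ‖y m‖ ≤ c) : Summable fun m => (A ^ m) (y m) :=
  .of_norm_bounded ((summable_geometric_of_lt_one (norm_nonneg A) hA).mul_right c)
    fun m => (A.norm_pow_apply_le m (y m)).trans (by gcongr; exact hy m)

theorem ContinuousLinearMap.norm_tsum_pow_apply_le (hA : ‖A‖ < 1) (hy : ∀ m, ‖y m‖ ≤ c) :
    ‖∑' m, (A ^ m) (y m)‖ ≤ c / (1 - ‖A‖) := by
  rw [div_eq_inv_mul]
  exact tsum_of_norm_bounded ((hasSum_geometric_of_lt_one (norm_nonneg A) hA).mul_right c)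
    fun m => (A.norm_pow_apply_le m (y m)).trans (by gcongr; exact hy m)

theorem ContinuousLinearMap.norm_sum_range_pow_apply_le (hA : ‖A‖ < 1) (hy : ∀ j, ‖y j‖ ≤ c)
    (k : ℕ) : ‖∑ j ∈ Finset.range k, (A ^ (k - 1 - j)) (y j)‖ ≤ c / (1 - ‖A‖) := by
  have hc : 0 ≤ c := (norm_nonneg _).trans (hy 0)
  calc ‖∑ j ∈ Finset.range k, (A ^ (k - 1 - j)) (y j)‖
      ≤ ∑ j ∈ Finset.range k, ‖A‖ ^ (k - 1 - j) * c :=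
        norm_sum_le_of_le _ fun j _ => (A.norm_pow_apply_le _ _).trans (by gcongr; exact hy j)
    _ = (∑ i ∈ Finset.range k, ‖A‖ ^ i) * c := by
        rw [← Finset.sum_mul, Finset.sum_range_reflect (‖A‖ ^ ·) k]
    _ ≤ 1 / (1 - ‖A‖) * c := by
        gcongr
        simpa using geom_sum_Ico_le_of_lt_one (norm_nonneg A) hA (m := 0) (n := k)
    _ = c / (1 - ‖A‖) := by ring

end PowerSeries

section MeanField

variable {n : ℕ} {Φ : Type*} (H G Q : Φ → (EuclideanSpace ℝ (Fin n) →L[ℝ] EuclideanSpace ℝ (Fin n)))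
  (ν : Φ → EuclideanSpace ℝ (Fin n)) {X : ℕ → EuclideanSpace ℝ (Fin n)} {C : ℝ} {φ : Φ}

theorem summable_adjoint_pow_apply (hH : ‖H φ‖ < 1) (hX : ∀ k, ‖X k‖ ≤ C) (j : ℕ) :
    Summable fun m : ℕ => ((ContinuousLinearMap.adjoint (H φ)) ^ m) ((Q φ) (X (j + 1 + m))) :=
  ContinuousLinearMap.summable_pow_apply_of_norm_lt_one
    (by rwa [ContinuousLinearMap.adjoint.norm_map]) fun _ => (Q φ).le_opNorm_of_le (hX _)

theorem norm_tsum_adjoint_pow_apply_le (hH : ‖H φ‖ < 1) (hX : ∀ k, ‖X k‖ ≤ C) (j : ℕ) :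
    ‖∑' m : ℕ, ((ContinuousLinearMap.adjoint (H φ)) ^ m) ((Q φ) (X (j + 1 + m)))‖
      ≤ ‖Q φ‖ * C / (1 - ‖H φ‖) := by
  rw [← ContinuousLinearMap.adjoint.norm_map (H φ)]
  exact ContinuousLinearMap.norm_tsum_pow_apply_le
    (by rwa [ContinuousLinearMap.adjoint.norm_map]) fun _ => (Q φ).le_opNorm_of_le (hX _)

theorem norm_XhatMF_le (hH : ‖H φ‖ < 1) (hX : ∀ k, ‖X k‖ ≤ C) (k : ℕ) :
    ‖XhatMF H G Q ν X φ k‖ ≤ ‖ν φ‖ + ‖G φ‖ * ‖Q φ‖ * C / (1 - ‖H φ‖) ^ 2 := by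
  have h_free : ‖((H φ) ^ k) (ν φ)‖ ≤ ‖ν φ‖ :=
    ((H φ).norm_pow_apply_le k (ν φ)).trans
      (mul_le_of_le_one_left (norm_nonneg _) (pow_le_one₀ (norm_nonneg _) hH.le))
  have h_forced := (H φ).norm_sum_range_pow_apply_le hH
    (fun j => (G φ).le_opNorm_of_le (norm_tsum_adjoint_pow_apply_le H Q hH hX j)) k
  calc ‖XhatMF H G Q ν X φ k‖ ≤ ‖ν φ‖ + ‖G φ‖ * (‖Q φ‖ * C / (1 - ‖H φ‖)) / (1 - ‖H φ‖) :=
        (norm_add_le _ _).trans (add_le_add h_free h_forced)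
    _ = ‖ν φ‖ + ‖G φ‖ * ‖Q φ‖ * C / (1 - ‖H φ‖) ^ 2 := by rw [sq, ← div_div]; ring

end MeanField

theorem norm_sum_smul_le_of_nonneg {ι E : Type*} [SeminormedAddCommGroup E] [NormedSpace ℝ E]
    (s : Finset ι) {w B : ι → ℝ} {v : ι → E} (hw : ∀ i ∈ s, 0 ≤ w i)
    (hv : ∀ i ∈ s, ‖v i‖ ≤ B i) : ‖∑ i ∈ s, w i • v i‖ ≤ ∑ i ∈ s, B i * w i :=
  norm_sum_le_of_le s fun i hi => by
    rw [norm_smul, Real.norm_of_nonneg (hw i hi), mul_comm]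
    exact mul_le_mul_of_nonneg_right (hv i hi) (hw i hi)

theorem stmt3_general {n : ℕ} {Φ : Type*} [Fintype Φ]
    (H G Q : Φ → (EuclideanSpace ℝ (Fin n) →L[ℝ] EuclideanSpace ℝ (Fin n)))
    (hH : ∀ φ, ‖H φ‖ < 1)
    (P : Φ → ℝ) (hP : ∀ φ, 0 ≤ P φ)
    (ν : Φ → EuclideanSpace ℝ (Fin n))
    (X : ℕ → EuclideanSpace ℝ (Fin n)) (C : ℝ) (hX : ∀ k, ‖X k‖ ≤ C) :
    (∀ (φ : Φ) (j : ℕ), Summable fun m : ℕ =>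
        ((ContinuousLinearMap.adjoint (H φ)) ^ m) ((Q φ) (X (j + 1 + m)))) ∧
    (∀ k, ‖TMF H G Q P ν X k‖
        ≤ ∑ φ, (‖ν φ‖ + ‖G φ‖ * ‖Q φ‖ * C / (1 - ‖H φ‖) ^ 2) * P φ) :=
  ⟨fun φ => summable_adjoint_pow_apply H Q (hH φ) hX, fun k =>
    norm_sum_smul_le_of_nonneg _ (fun φ _ => hP φ) fun φ _ => norm_XhatMF_le H G Q ν (hH φ) hX k⟩

/-- In the mean-field operator setup, for every bounded sequence `X̄`
(with bound `C`), the inner series converges for every `j` and `φ`, and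
`‖T(X̄)(k)‖ ≤ ∑_φ (‖ν(φ)‖ + ‖G(φ)‖‖Q(φ)‖ C / (1-‖H(φ)‖)²) P(φ)` for all `k`;
in particular `T` maps bounded sequences to bounded sequences. -/
theorem stmt3 {n : ℕ} {Φ : Type*} [Fintype Φ] [Nonempty Φ]
    (H G Q : Φ → (EuclideanSpace ℝ (Fin n) →L[ℝ] EuclideanSpace ℝ (Fin n)))
    (hH : ∀ φ, ‖H φ‖ < 1)
    (P : Φ → ℝ) (hP : ∀ φ, 0 ≤ P φ) (hPsum : ∑ φ, P φ = 1)
    (ν : Φ → EuclideanSpace ℝ (Fin n))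
    (X : ℕ → EuclideanSpace ℝ (Fin n)) (C : ℝ) (hX : ∀ k, ‖X k‖ ≤ C) :
    (∀ (φ : Φ) (j : ℕ), Summable fun m : ℕ =>
        ((ContinuousLinearMap.adjoint (H φ)) ^ m) ((Q φ) (X (j + 1 + m)))) ∧
    (∀ k, ‖TMF H G Q P ν X k‖
        ≤ ∑ φ, (‖ν φ‖ + ‖G φ‖ * ‖Q φ‖ * C / (1 - ‖H φ‖) ^ 2) * P φ) :=
  stmt3_general H G Q hH P hP ν X C hX
end

section
/- Let T ≥ 1 be an integer, let Q be a real symmetric positive semidefinite n×n matrix, and let x, m, x̄ : {0, …, T-1} → ℝⁿ be finite sequences. Define ε := (1/T) ∑_{k=0}^{T-1} ‖x̄_k - m_k‖² and D := (1/T) ∑_{k=0}^{T-1} ‖x_k - x̄_k‖². Then (1/T) ∑_{k=0}^{T-1} (x_k - m_k)ᵀ Q (x_k - m_k) - (1/T) ∑_{k=0}^{T-1} (x_k - x̄_k)ᵀ Q (x_k - x̄_k) ≤ ‖Q‖ ε + 2 ‖Q‖ √(ε · D). -/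
open scoped RealInnerProductSpace

open Finset

/-! Writing `x - m = (x - x̄) + (x̄ - m)`, the difference of the two quadratic forms is
`⟪Q(x - x̄), x̄ - m⟫ + ⟪Q(x̄ - m), x - x̄⟫ + ⟪Q(x̄ - m), x̄ - m⟫`, which the operator norm bounds
by `2‖Q‖‖x - x̄‖‖x̄ - m‖ + ‖Q‖‖x̄ - m‖²`. Averaging over `k` and applying Cauchy–Schwarz to the
cross term gives the claim. -/

theorem ContinuousLinearMap.inner_map_add_self_sub_le {E : Type*} [NormedAddCommGroup E]
    [InnerProductSpace ℝ E] (f : E →L[ℝ] E) (v w : E) :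
    ⟪f (v + w), v + w⟫ - ⟪f v, v⟫ ≤ ‖f‖ * ‖w‖ ^ 2 + 2 * ‖f‖ * (‖w‖ * ‖v‖) := by
  have bound (a b : E) : ⟪f a, b⟫ ≤ ‖f‖ * ‖a‖ * ‖b‖ :=
    (real_inner_le_norm _ _).trans (by gcongr; exact f.le_opNorm a)
  have expand : ⟪f (v + w), v + w⟫ - ⟪f v, v⟫ = ⟪f v, w⟫ + ⟪f w, v⟫ + ⟪f w, w⟫ := by
    simp only [map_add, inner_add_left, inner_add_right]
    ring
  rw [expand]
  nlinarith [bound v w, bound w v, bound w w]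

theorem Real.mul_sum_mul_le_sqrt_mul {ι : Type*} (s : Finset ι) (f g : ι → ℝ) (c : ℝ) :
    c * ∑ i ∈ s, f i * g i ≤ √((c * ∑ i ∈ s, f i ^ 2) * (c * ∑ i ∈ s, g i ^ 2)) := by
  refine (le_abs_self _).trans (Real.abs_le_sqrt ?_)
  calc (c * ∑ i ∈ s, f i * g i) ^ 2 = c ^ 2 * (∑ i ∈ s, f i * g i) ^ 2 := by ring
    _ ≤ c ^ 2 * ((∑ i ∈ s, f i ^ 2) * ∑ i ∈ s, g i ^ 2) := by
        gcongr
        exact sum_mul_sq_le_sq_mul_sq s f g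
    _ = _ := by ring

theorem stmt14_general {n : ℕ} (T : ℕ)
    (Q : EuclideanSpace ℝ (Fin n) →L[ℝ] EuclideanSpace ℝ (Fin n))
    (x m xbar : ℕ → EuclideanSpace ℝ (Fin n))
    (ε D : ℝ)
    (hε : ε = (1 / (T : ℝ)) * ∑ k ∈ Finset.range T, ‖xbar k - m k‖ ^ 2)
    (hD : D = (1 / (T : ℝ)) * ∑ k ∈ Finset.range T, ‖x k - xbar k‖ ^ 2) :
    (1 / (T : ℝ)) * ∑ k ∈ Finset.range T, ⟪Q (x k - m k), x k - m k⟫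
      - (1 / (T : ℝ)) * ∑ k ∈ Finset.range T, ⟪Q (x k - xbar k), x k - xbar k⟫
      ≤ ‖Q‖ * ε + 2 * ‖Q‖ * Real.sqrt (ε * D) := by
  subst hε hD
  calc _ = 1 / (T : ℝ) * ∑ k ∈ range T,
        (⟪Q (x k - xbar k + (xbar k - m k)), x k - xbar k + (xbar k - m k)⟫
          - ⟪Q (x k - xbar k), x k - xbar k⟫) := by
        simp only [sub_add_sub_cancel, sum_sub_distrib, mul_sub]
    _ ≤ 1 / (T : ℝ) * ∑ k ∈ range T,
        (‖Q‖ * ‖xbar k - m k‖ ^ 2 + 2 * ‖Q‖ * (‖xbar k - m k‖ * ‖x k - xbar k‖)) := by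
        gcongr with k
        exact Q.inner_map_add_self_sub_le _ _
    _ = ‖Q‖ * (1 / (T : ℝ) * ∑ k ∈ range T, ‖xbar k - m k‖ ^ 2)
        + 2 * ‖Q‖ * (1 / (T : ℝ) * ∑ k ∈ range T, ‖xbar k - m k‖ * ‖x k - xbar k‖) := by
        rw [sum_add_distrib, ← mul_sum, ← mul_sum]
        ring
    _ ≤ _ := by
        gcongr
        exact Real.mul_sum_mul_le_sqrt_mul _ _ _ _

/-- Let `T ≥ 1`, let `Q` be a real symmetric positive semidefinite
n×n matrix (modeled as a self-adjoint continuous linear map on Euclidean space, with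
`vᵀQv = ⟪Q v, v⟫`), and let `x, m, x̄ : {0,…,T-1} → ℝⁿ`. With
`ε = (1/T) ∑_k ‖x̄_k - m_k‖²` and `D = (1/T) ∑_k ‖x_k - x̄_k‖²`, one has
`(1/T) ∑_k (x_k-m_k)ᵀQ(x_k-m_k) - (1/T) ∑_k (x_k-x̄_k)ᵀQ(x_k-x̄_k)
  ≤ ‖Q‖ ε + 2‖Q‖ √(ε D)`. -/
theorem stmt14 {n : ℕ} (T : ℕ) (hT : 1 ≤ T)
    (Q : EuclideanSpace ℝ (Fin n) →L[ℝ] EuclideanSpace ℝ (Fin n))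
    (hQsym : ∀ v w : EuclideanSpace ℝ (Fin n), ⟪Q v, w⟫ = ⟪v, Q w⟫)
    (hQpsd : ∀ v : EuclideanSpace ℝ (Fin n), 0 ≤ ⟪Q v, v⟫)
    (x m xbar : ℕ → EuclideanSpace ℝ (Fin n))
    (ε D : ℝ)
    (hε : ε = (1 / (T : ℝ)) * ∑ k ∈ Finset.range T, ‖xbar k - m k‖ ^ 2)
    (hD : D = (1 / (T : ℝ)) * ∑ k ∈ Finset.range T, ‖x k - xbar k‖ ^ 2) :
    (1 / (T : ℝ)) * ∑ k ∈ Finset.range T, ⟪Q (x k - m k), x k - m k⟫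
      - (1 / (T : ℝ)) * ∑ k ∈ Finset.range T, ⟪Q (x k - xbar k), x k - xbar k⟫
      ≤ ‖Q‖ * ε + 2 * ‖Q‖ * Real.sqrt (ε * D) :=
  stmt14_general T Q x m xbar ε D hε hD
end
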